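/- arXiv:1310.7719 — 4 statements merged into one kernel-verified Lean document; each statement's English description precedes it below -/
import Mathlib

section
/- For any team X (a set of functions s : I → M), the team independence relation x ⊥ y, defined by: for all s, s' ∈ X there exists s'' ∈ X agreeing with s on x and with s' on y, satisfies axioms I1–I5 of an independence structure. -/
/-- The team independence relation: `x ⊥ y` iff for all `s, s' ∈ X` there is `s'' ∈ X`
agreeing with `s` on `x` and with `s'` on `y`. -/
def teamIndep {I M : Type*} (X : Set (I → M)) (x y : Set I) : Prop :=
  ∀ s ∈ X, ∀ s' ∈ X, ∃ s'' ∈ X, (∀ v ∈ x, s'' v = s v) ∧ (∀ v ∈ y, s'' v = s' v)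

/-- For any team `X`, the team independence relation satisfies axioms (I1)–(I5) of an
independence structure. -/
theorem team_is_independence_structure {I M : Type*} (X : Set (I → M)) :
    -- (I1)
    (∀ x : Set I, x.Finite → teamIndep X x ∅) ∧
    -- (I2)
    (∀ x y : Set I, x.Finite → y.Finite → teamIndep X x y → teamIndep X y x) ∧
    -- (I3)
    (∀ x y z : Set I, x.Finite → y.Finite → z.Finite →
      teamIndep X x (y ∪ z) → teamIndep X x y) ∧
    -- (I4)
    (∀ x y z : Set I, x.Finite → y.Finite → z.Finite →
      teamIndep X x y → teamIndep X (x ∪ y) z → teamIndep X x (y ∪ z)) ∧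
    -- (I5)
    (∀ x y : Set I, x.Finite → y.Finite → teamIndep X x x → teamIndep X x y) := by
  refine ⟨?_, ?_, ?_, ?_, ?_⟩
  · intro x _ s hs s' hs'
    exact ⟨s, hs, fun v _ => rfl, fun v hv => absurd hv (Set.notMem_empty v)⟩
  · intro x y _ _ h s hs s' hs'
    obtain ⟨t, ht, h1, h2⟩ := h s' hs' s hs
    exact ⟨t, ht, h2, h1⟩
  · intro x y z _ _ _ h s hs s' hs'
    obtain ⟨t, ht, h1, h2⟩ := h s hs s' hs'
    exact ⟨t, ht, h1, fun v hv => h2 v (Or.inl hv)⟩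
  · intro x y z _ _ _ hxy hxyz s hs s' hs'
    obtain ⟨t, ht, ht1, ht2⟩ := hxy s hs s' hs'
    obtain ⟨u, hu, hu1, hu2⟩ := hxyz t ht s' hs'
    refine ⟨u, hu, fun v hv => (hu1 v (Or.inl hv)).trans (ht1 v hv), ?_⟩
    rintro v (hv | hv)
    · exact (hu1 v (Or.inr hv)).trans (ht2 v hv)
    · exact hu2 v hv
  · intro x y _ _ h s hs s' hs'
    obtain ⟨t, ht, h1, h2⟩ := h s hs s' hs'
    exact ⟨s', hs', fun v hv => (h2 v hv).symm.trans (h1 v hv), fun v _ => rfl⟩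
end

section
/- In a vector space V over a field K, for finite subsets x, y ⊆ V, we have span(x) ∩ span(y) = {0} if and only if dim(a / y) = dim(a / ∅) for every finite tuple a from x, where dimension is computed via the span pregeometry. -/
/-- `cl` is a pregeometry operator on `M`: a closure operator satisfying the Exchange
Principle and Finite Character. -/
structure IsPregeometry {M : Type*} (cl : Set M → Set M) : Prop where
  subset_cl : ∀ A : Set M, A ⊆ cl A
  mono : ∀ A B : Set M, A ⊆ B → cl A ⊆ cl B
  idem : ∀ A : Set M, cl (cl A) = cl A
  exchange : ∀ (A : Set M) (a b : M), a ∈ cl (A ∪ {b}) → a ∉ cl A → b ∈ cl (A ∪ {a})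
  finChar : ∀ (A : Set M) (a : M), a ∈ cl A → ∃ A₀ ⊆ A, A₀.Finite ∧ a ∈ cl A₀

/-- `S` is independent over `B` (i.e. independent in the localization `cl_B`). -/
def IndepOver {M : Type*} (cl : Set M → Set M) (B S : Set M) : Prop :=
  ∀ a ∈ S, a ∉ cl (B ∪ (S \ {a}))

/-- `b` is a basis for `S` over `B`: `b ⊆ S`, `b` is independent over `B`, and
`S ⊆ cl (B ∪ b)`. -/
def IsBasisOver {M : Type*} (cl : Set M → Set M) (B S b : Set M) : Prop :=
  b ⊆ S ∧ IndepOver cl B b ∧ S ⊆ cl (B ∪ b)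

/-- `dim(S / B)`: the cardinality of a basis of `S` in the localization `cl_B`. -/
noncomputable def dimOver {M : Type*} (cl : Set M → Set M) (B S : Set M) : ℕ :=
  sInf {n | ∃ b : Set M, IsBasisOver cl B S b ∧ b.ncard = n}

/-- `A ⊥_B C`: for every finite tuple `a` from `A`, `dim(a / B ∪ C) = dim(a / B)`. -/
def IndepRel {M : Type*} (cl : Set M → Set M) (B A C : Set M) : Prop :=
  ∀ a : Set M, a ⊆ A → a.Finite → dimOver cl (B ∪ C) a = dimOver cl B a

open Submodule Set Module

section Aux
variable {K V : Type*} [Field K] [AddCommGroup V] [Module K V]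

lemma li_set_iff (t : Set V) :
    LinearIndependent K ((↑) : t → V) ↔ ∀ a ∈ t, a ∉ Submodule.span K (t \ {a}) := by
  rw [linearIndependent_iff_notMem_span]
  have key : ∀ i : t, (Subtype.val '' (Set.univ \ {i}) : Set V) = t \ {(i : V)} := by
    intro i; ext v
    simp only [Set.mem_image, Set.mem_diff, Set.mem_univ, true_and, Set.mem_singleton_iff]
    constructor
    · rintro ⟨j, hj, rfl⟩; exact ⟨j.2, fun h => hj (Subtype.ext h)⟩
    · rintro ⟨hv, hne⟩; exact ⟨⟨v, hv⟩, fun h => hne (congrArg Subtype.val h), rfl⟩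
  constructor
  · intro h a ha
    have := h ⟨a, ha⟩
    rwa [key ⟨a, ha⟩] at this
  · intro h i
    rw [key i]
    exact h i i.2

lemma map_mkQ_span_union (B c : Set V) :
    Submodule.map (Submodule.span K B).mkQ (Submodule.span K (B ∪ c)) =
      Submodule.map (Submodule.span K B).mkQ (Submodule.span K c) := by
  rw [Submodule.span_union, Submodule.map_sup]
  have h : Submodule.map (Submodule.span K B).mkQ (Submodule.span K B) = ⊥ := by
    rw [eq_bot_iff]
    rintro _ ⟨v, hv, rfl⟩
    simpa [Submodule.mem_bot, Submodule.mkQ_apply, Submodule.Quotient.mk_eq_zero] using hv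
  rw [h, bot_sup_eq]

lemma mem_span_union_iff (B c : Set V) (s : V) :
    s ∈ Submodule.span K (B ∪ c) ↔
      (Submodule.span K B).mkQ s ∈
        Submodule.map (Submodule.span K B).mkQ (Submodule.span K c) := by
  constructor
  · intro h
    rw [← map_mkQ_span_union]
    exact Submodule.mem_map_of_mem h
  · rintro ⟨v, hv, hq⟩
    have hsv : s - v ∈ Submodule.span K B := by
      rw [← Submodule.ker_mkQ (Submodule.span K B), LinearMap.mem_ker, map_sub, hq, sub_self]
    rw [Submodule.span_union]
    have := Submodule.add_mem_sup hsv hv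
    rwa [sub_add_cancel] at this

theorem dimOver_span (B S : Set V) (hS : S.Finite) :
    dimOver (fun A : Set V => (Submodule.span K A : Set V)) B S =
      Module.finrank K (Submodule.map (Submodule.span K B).mkQ (Submodule.span K S)) := by
  classical
  set q := (Submodule.span K B).mkQ with hqdef
  set d := Module.finrank K (Submodule.map q (Submodule.span K S)) with hddef
  -- every basis has cardinality d
  have claimcard : ∀ b : Set V,
      IsBasisOver (fun A : Set V => (Submodule.span K A : Set V)) B S b → b.ncard = d := by
    rintro b ⟨hbS, hind, hsp⟩
    have hfb : b.Finite := hS.subset hbS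
    have hinj : Set.InjOn q b := by
      intro a ha a' ha' hq
      by_contra hne
      apply hind a ha
      show a ∈ (Submodule.span K (B ∪ (b \ {a})) : Set V)
      rw [SetLike.mem_coe, mem_span_union_iff]
      exact ⟨a', Submodule.subset_span ⟨ha', fun h => hne (Set.eq_of_mem_singleton h).symm⟩, hq.symm⟩
    have hqb_li : LinearIndependent K ((↑) : (q '' b) → V ⧸ Submodule.span K B) := by
      rw [li_set_iff]
      rintro _ ⟨a, ha, rfl⟩ hw
      apply hind a ha
      show a ∈ (Submodule.span K (B ∪ (b \ {a})) : Set V)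
      rw [SetLike.mem_coe, mem_span_union_iff]
      have hsub : (q '' b) \ {q a} ⊆ q '' (b \ {a}) := by
        rintro _ ⟨⟨a', ha', rfl⟩, hne⟩
        exact ⟨a', ⟨ha', fun h => hne (Set.mem_singleton_iff.mpr (congrArg _ (Set.eq_of_mem_singleton h)))⟩, rfl⟩
      have h2 := Submodule.span_mono hsub hw
      rwa [Submodule.span_image] at h2
    have hqb_span : Submodule.span K (q '' b) = Submodule.map q (Submodule.span K S) := by
      apply le_antisymm
      · rw [Submodule.span_image]
        exact Submodule.map_mono (Submodule.span_mono hbS)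
      · have h1 : Submodule.span K S ≤ Submodule.span K (B ∪ b) := Submodule.span_le.mpr hsp
        calc Submodule.map q (Submodule.span K S)
            ≤ Submodule.map q (Submodule.span K (B ∪ b)) := Submodule.map_mono h1
          _ = Submodule.map q (Submodule.span K b) := map_mkQ_span_union B b
          _ = Submodule.span K (q '' b) := (Submodule.span_image q).symm
    have hfqb : (q '' b).Finite := hfb.image q
    haveI := hfqb.fintype
    have hcard := finrank_span_set_eq_card hqb_li
    rw [hqb_span] at hcard
    rw [← Set.ncard_image_of_injOn hinj, Set.ncard_eq_toFinset_card', hddef]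
    exact hcard.symm
  -- a basis exists
  have claimexist : ∃ b : Set V,
      IsBasisOver (fun A : Set V => (Submodule.span K A : Set V)) B S b := by
    obtain ⟨t, hts, htsp, htli⟩ := exists_linearIndependent K (q '' S)
    have hch : ∀ w, w ∈ t → ∃ a, a ∈ S ∧ q a = w := by
      intro w hw
      obtain ⟨a, ha, rfl⟩ := hts hw
      exact ⟨a, ha, rfl⟩
    set g : V ⧸ Submodule.span K B → V :=
      fun w => if h : ∃ a, a ∈ S ∧ q a = w then h.choose else 0 with hg
    have hgspec : ∀ w ∈ t, g w ∈ S ∧ q (g w) = w := by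
      intro w hw
      have h := hch w hw
      simp only [hg, dif_pos h]
      exact ⟨h.choose_spec.1, h.choose_spec.2⟩
    refine ⟨g '' t, ?_, ?_, ?_⟩
    · rintro _ ⟨w, hw, rfl⟩; exact (hgspec w hw).1
    · rintro _ ⟨w, hw, rfl⟩ hmem
      rw [SetLike.mem_coe, mem_span_union_iff, ← Submodule.span_image] at hmem
      have hsub : q '' ((g '' t) \ {g w}) ⊆ t \ {w} := by
        rintro _ ⟨_, ⟨⟨u, hu, rfl⟩, hne⟩, rfl⟩
        rw [(hgspec u hu).2]
        exact ⟨hu, fun h => hne (Set.mem_singleton_iff.mpr (congrArg _ (Set.eq_of_mem_singleton h)))⟩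
      have h2 := Submodule.span_mono hsub hmem
      rw [(hgspec w hw).2] at h2
      exact (li_set_iff t).mp htli w hw h2
    · intro s hs
      have h1 : q s ∈ Submodule.span K t := htsp ▸ Submodule.subset_span ⟨s, hs, rfl⟩
      have h2 : q '' (g '' t) = t := by
        rw [Set.image_image]
        calc (fun w => q (g w)) '' t = id '' t :=
              Set.image_congr fun w hw => (hgspec w hw).2
          _ = t := Set.image_id t
      show s ∈ (Submodule.span K (B ∪ g '' t) : Set V)
      rw [SetLike.mem_coe, mem_span_union_iff, ← Submodule.span_image, h2]
      exact h1
  have hset : {n | ∃ b : Set V,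
      IsBasisOver (fun A : Set V => (Submodule.span K A : Set V)) B S b ∧ b.ncard = n} = {d} := by
    ext n
    simp only [Set.mem_setOf_eq, Set.mem_singleton_iff]
    constructor
    · rintro ⟨b, hb, rfl⟩; exact claimcard b hb
    · rintro rfl
      obtain ⟨b, hb⟩ := claimexist
      exact ⟨b, hb, claimcard b hb⟩
  rw [dimOver, hset, csInf_singleton]


lemma finrank_map_mkQ_eq_iff (p y' : Submodule K V) [FiniteDimensional K p] :
    Module.finrank K (Submodule.map y'.mkQ p) = Module.finrank K p ↔ p ⊓ y' = ⊥ := by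
  set f := y'.mkQ.comp p.subtype with hf
  have hr : LinearMap.range f = Submodule.map y'.mkQ p := by
    rw [hf, LinearMap.range_comp, Submodule.range_subtype]
  have hk : LinearMap.ker f = Submodule.comap p.subtype y' := by
    rw [hf, LinearMap.ker_comp, Submodule.ker_mkQ]
  have hrn := LinearMap.finrank_range_add_finrank_ker f
  rw [hr, hk] at hrn
  constructor
  · intro h
    rw [h] at hrn
    have h0 : Module.finrank K (Submodule.comap p.subtype y') = 0 := by
      have := Submodule.finrank_le (Submodule.comap p.subtype y')
      omega
    have hb : Submodule.comap p.subtype y' = ⊥ := Submodule.finrank_eq_zero.mp h0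
    have hmap := congrArg (Submodule.map p.subtype) hb
    rwa [Submodule.map_comap_subtype, Submodule.map_bot] at hmap
  · intro h
    have hb : Submodule.comap p.subtype y' = ⊥ := by
      rw [eq_bot_iff]
      intro v hv
      have : (v : V) ∈ p ⊓ y' := ⟨v.2, hv⟩
      rw [h, Submodule.mem_bot] at this
      simpa [Submodule.mem_bot] using Subtype.ext this
    rw [hb, finrank_bot] at hrn
    omega

theorem span_inter_trivial_iff_dim' (x y : Set V) (hx : x.Finite) (hy : y.Finite) :
    Submodule.span K x ⊓ Submodule.span K y = ⊥ ↔
      ∀ a : Set V, a ⊆ x → a.Finite →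
        dimOver (fun A : Set V => (Submodule.span K A : Set V)) y a =
          dimOver (fun A : Set V => (Submodule.span K A : Set V)) ∅ a := by
  constructor
  · intro h a hax ha
    haveI := FiniteDimensional.span_of_finite K ha
    have h1 : Submodule.span K a ⊓ Submodule.span K y = ⊥ := by
      rw [eq_bot_iff, ← h]
      exact inf_le_inf_right _ (Submodule.span_mono hax)
    have h2 : Submodule.span K a ⊓ Submodule.span K (∅ : Set V) = ⊥ := by simp
    rw [dimOver_span y a ha, dimOver_span ∅ a ha,
      (finrank_map_mkQ_eq_iff (Submodule.span K a) (Submodule.span K y)).mpr h1,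
      (finrank_map_mkQ_eq_iff (Submodule.span K a) (Submodule.span K (∅ : Set V))).mpr h2]
  · intro h
    haveI := FiniteDimensional.span_of_finite K hx
    have hx' := h x subset_rfl hx
    have h2 : Submodule.span K x ⊓ Submodule.span K (∅ : Set V) = ⊥ := by simp
    rw [dimOver_span y x hx, dimOver_span ∅ x hx,
      (finrank_map_mkQ_eq_iff (Submodule.span K x) (Submodule.span K (∅ : Set V))).mpr h2] at hx'
    exact (finrank_map_mkQ_eq_iff (Submodule.span K x) (Submodule.span K y)).mp hx'

end Aux

/-- In a vector space `V` over a field `K`, for finite subsets `x, y ⊆ V`: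
`span x ⊓ span y = ⊥` iff `dim(a / y) = dim(a / ∅)` for every finite tuple `a` from `x`,
where dimension is computed in the span pregeometry. -/
theorem span_inter_trivial_iff_dim (K V : Type*) [Field K] [AddCommGroup V] [Module K V]
    (x y : Set V) (hx : x.Finite) (hy : y.Finite) :
    Submodule.span K x ⊓ Submodule.span K y = ⊥ ↔
      ∀ a : Set V, a ⊆ x → a.Finite →
        dimOver (fun A : Set V => (Submodule.span K A : Set V)) y a =
          dimOver (fun A : Set V => (Submodule.span K A : Set V)) ∅ a := 
  span_inter_trivial_iff_dim' x y hx hy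
end

section
/- Suppose (M, cl) is a closure system with ∅ ≠ cl(∅) ≠ M. If a set Σ of dependence atoms over a set of variables does not derive dep(x̄, ȳ) in the dependence calculus (rules a₁–e₁), then there is an assignment s into M satisfying all atoms of Σ under the semantics (s satisfies dep(v̄, w̄) iff s(w̄) ⊆ cl(s(v̄))) but not satisfying dep(x̄, ȳ). Moreover, s can be chosen to take only two values a ∈ cl(∅) and b ∉ cl({a}). -/
/-- Derivability in the atomic dependence calculus (rules a₁–e₁) from a set `Γ` of
dependence atoms. An atom `dep(x̄, ȳ)` is coded as a pair of lists of variables. -/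
inductive DepDeriv {V : Type*} (Γ : Set (List V × List V)) : List V × List V → Prop
  | mem {p} : p ∈ Γ → DepDeriv Γ p
  /-- (a₁) `dep(x̄, x̄)` -/
  | refl (x : List V) : DepDeriv Γ (x, x)
  /-- (b₁) if `dep(x̄, ȳz̄)` then `dep(x̄ū, ȳ)` -/
  | weak {x y z : List V} (u : List V) : DepDeriv Γ (x, y ++ z) → DepDeriv Γ (x ++ u, y)
  /-- (c₁) transitivity -/
  | trans {x y z : List V} : DepDeriv Γ (x, y) → DepDeriv Γ (y, z) → DepDeriv Γ (x, z)
  /-- (d₁) if `dep(x̄, ȳ)` and `dep(x̄, v̄)` then `dep(x̄, ȳv̄)` -/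
  | union {x y v : List V} : DepDeriv Γ (x, y) → DepDeriv Γ (x, v) → DepDeriv Γ (x, y ++ v)
  /-- (e₁) permutation of `x̄` -/
  | perm {x y z : List V} : DepDeriv Γ (x, y) → x.Perm z → DepDeriv Γ (z, y)

/-- An assignment `s` satisfies the atom `dep(x̄, ȳ)` in the closure operator semantics:
every element of `s(ȳ)` lies in `cl(s(x̄))`. -/
def DepSat {V M : Type*} (cl : Set M → Set M) (s : V → M) (p : List V × List V) : Prop :=
  ∀ w ∈ p.2, s w ∈ cl (s '' {v | v ∈ p.1})

lemma DepDeriv.single {V : Type*} {Γ : Set (List V × List V)} :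
    ∀ (y : List V) (v : V), v ∈ y → DepDeriv Γ (y, [v]) := by
  intro y
  induction y with
  | nil => intro v h; simp at h
  | cons w t ih =>
    intro v hv
    rcases List.mem_cons.mp hv with rfl | hv
    · have h0 : DepDeriv Γ ([v], [v] ++ []) := by simpa using DepDeriv.refl [v]
      exact DepDeriv.weak t h0
    · have h0 : DepDeriv Γ (t, [v] ++ []) := by simpa using ih v hv
      exact DepDeriv.perm (DepDeriv.weak [w] h0) (by simpa using List.perm_append_singleton w t)

lemma DepDeriv.empty {V : Type*} {Γ : Set (List V × List V)} (x : List V) :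
    DepDeriv Γ (x, []) := by
  have h0 : DepDeriv Γ (x, [] ++ x) := by simpa using DepDeriv.refl x
  exact DepDeriv.perm (DepDeriv.weak [] h0) (by simp)

lemma DepDeriv.of_all_single {V : Type*} {Γ : Set (List V × List V)} {x : List V} :
    ∀ {y : List V}, (∀ v ∈ y, DepDeriv Γ (x, [v])) → DepDeriv Γ (x, y) := by
  intro y
  induction y with
  | nil => intro _; exact DepDeriv.empty x
  | cons w t ih =>
    intro h
    have : DepDeriv Γ (x, [w] ++ t) :=
      DepDeriv.union (h w (by simp)) (ih fun v hv => h v (List.mem_cons_of_mem _ hv))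
    simpa using this

/-- Completeness of the dependence calculus for a closure system `(M, cl)` with
`∅ ≠ cl ∅ ≠ M`: any non-derivable atom is refuted by an assignment satisfying `Γ`,
taking only two values `a ∈ cl ∅` and `b ∉ cl {a}`. -/
theorem closure_dependence_completeness {V M : Type*} (cl : Set M → Set M)
    (h1 : ∀ A : Set M, A ⊆ cl A)
    (h2 : ∀ A B : Set M, A ⊆ B → cl A ⊆ cl B)
    (h3 : ∀ A : Set M, cl (cl A) = cl A)
    (hne : (cl ∅).Nonempty) (hneq : cl ∅ ≠ Set.univ)
    (Γ : Set (List V × List V)) (x y : List V)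
    (hnd : ¬ DepDeriv Γ (x, y)) :
    ∃ (s : V → M) (a b : M), a ∈ cl ∅ ∧ b ∉ cl {a} ∧ (∀ v, s v = a ∨ s v = b) ∧
      (∀ p ∈ Γ, DepSat cl s p) ∧ ¬ DepSat cl s (x, y) := by
  obtain ⟨a, ha⟩ := hne
  have hcla : cl {a} ⊆ cl ∅ := by
    have : ({a} : Set M) ⊆ cl ∅ := by simpa using ha
    calc cl {a} ⊆ cl (cl ∅) := h2 _ _ this
    _ = cl ∅ := h3 _
  obtain ⟨b, hb⟩ : ∃ b, b ∉ cl ∅ := by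
    by_contra h
    push_neg at h
    exact hneq (Set.eq_univ_of_forall h)
  have hbcla : b ∉ cl {a} := fun h => hb (hcla h)
  classical
  set D : V → Prop := fun v => DepDeriv Γ (x, [v]) with hD
  set s : V → M := fun v => if D v then a else b with hs
  refine ⟨s, a, b, ha, hbcla, fun v => by by_cases h : D v <;> simp [hs, h], ?_, ?_⟩
  · rintro ⟨u, w⟩ hp ww hw
    simp only at hw ⊢
    by_cases hu : ∀ v ∈ u, D v
    · -- all of u derivable, so all of w derivable
      have hxu : DepDeriv Γ (x, u) := DepDeriv.of_all_single hu
      have hxw : DepDeriv Γ (x, w) := DepDeriv.trans hxu (DepDeriv.mem hp)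
      have hDw : D ww := DepDeriv.trans hxw (DepDeriv.single w ww hw)
      have : s ww = a := by simp [hs, hDw]
      rw [this]
      exact h2 ∅ _ (Set.empty_subset _) ha
    · by_cases hww : D ww
      · have : s ww = a := by simp [hs, hww]
        rw [this]
        exact h2 ∅ _ (Set.empty_subset _) ha
      · push_neg at hu
        obtain ⟨v0, hv0, hv0D⟩ := hu
        have : s ww = s v0 := by simp [hs, hww, hv0D]
        rw [this]
        exact h1 _ ⟨v0, hv0, rfl⟩
  · intro hsat
    apply hnd
    apply DepDeriv.of_all_single
    intro v hv
    have := hsat v hv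
    have himg : s '' {v | v ∈ x} ⊆ {a} := by
      rintro _ ⟨u, hu, rfl⟩
      have hDu : D u := DepDeriv.single x u hu
      simp [hs, hDu]
    have : s v ∈ cl {a} := h2 _ _ himg this
    by_cases hDv : D v
    · exact hDv
    · exfalso; apply hbcla; simpa [hs, hDv] using this
end

section
/- The absolute independence calculus is sound for teams: if Σ ⊢ ⊥(x̄) using rules (a₂) ⊥(∅), (b₂) ⊥(x̄ȳ) implies ⊥(x̄), and (c₂) closure under permutation, then every assignment into an absolute team independence structure satisfying all atoms of Σ also satisfies ⊥(x̄). -/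
/-- `x −_X xi`: the elements `xj` of `x` such that some assignment in the team `X`
distinguishes `xi` from `xj`. -/
def minusX {I M : Type*} (X : Set (I → M)) (x : Set I) (xi : I) : Set I :=
  {xj ∈ x | ∃ s ∈ X, s xi ≠ s xj}

/-- A finite set `x` of attributes is absolutely independent in the team `X`. -/
def AbsIndep {I M : Type*} (X : Set (I → M)) (x : Set I) : Prop :=
  ∀ xi ∈ x,
    (∀ s ∈ X, ∀ s' ∈ X, ∃ s'' ∈ X,
      s'' xi = s xi ∧ ∀ xj ∈ minusX X x xi, s'' xj = s' xj) ∧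
    (∃ s ∈ X, ∃ s' ∈ X, s xi ≠ s' xi)

/-- Derivability in the absolute independence calculus (rules a₂–c₂) from a set `Γ`
of absolute independence atoms, coded as lists of variables. -/
inductive AbsDeriv {V : Type*} (Γ : Set (List V)) : List V → Prop
  | mem {x} : x ∈ Γ → AbsDeriv Γ x
  /-- (a₂) `⊥(∅)` -/
  | empty : AbsDeriv Γ []
  /-- (b₂) if `⊥(x̄ȳ)` then `⊥(x̄)` -/
  | drop {x y : List V} : AbsDeriv Γ (x ++ y) → AbsDeriv Γ x
  /-- (c₂) permutation -/
  | perm {x y : List V} : AbsDeriv Γ x → x.Perm y → AbsDeriv Γ y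

lemma absIndep_mono {I M : Type*} {X : Set (I → M)} {x z : Set I}
    (hxz : x ⊆ z) (h : AbsIndep X z) : AbsIndep X x := by
  intro xi hxi
  obtain ⟨h1, h2⟩ := h xi (hxz hxi)
  refine ⟨fun s hs s' hs' => ?_, h2⟩
  obtain ⟨s'', hs'', he, hall⟩ := h1 s hs s' hs'
  exact ⟨s'', hs'', he, fun xj hxj => hall xj ⟨hxz hxj.1, hxj.2⟩⟩

/-- Soundness of the absolute independence calculus for absolute team independence
structures: whatever is derivable from `Γ` is satisfied by every assignment into a
team that satisfies all atoms of `Γ`. -/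
theorem abs_independence_soundness {V : Type*} (Γ : Set (List V)) (x : List V)
    (hd : AbsDeriv Γ x) :
    ∀ (I M : Type*) (X : Set (I → M)) (s : V → I),
      (∀ v ∈ Γ, AbsIndep X (s '' {a | a ∈ v})) →
      AbsIndep X (s '' {a | a ∈ x}) := by
  induction hd with
  | mem h => intro I M X s hΓ; exact hΓ _ h
  | empty => intro I M X s _ xi hxi; simp at hxi
  | drop h ih =>
      intro I M X s hΓ
      refine absIndep_mono ?_ (ih I M X s hΓ)
      intro a ha
      obtain ⟨b, hb, rfl⟩ := ha
      exact ⟨b, by simp [List.mem_append, hb.out], rfl⟩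
  | perm h hp ih =>
      intro I M X s hΓ
      have h2 := ih I M X s hΓ
      convert h2 using 3
      exact Set.ext fun a => (hp.mem_iff).symm
end
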